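/- Let (V, Φ) be a reduced irreducible root system with base Δ and highest root α^h. If α ∈ Δ is special, then α is W_α-conjugate to the highest root α^h. -/
import Mathlib
open scoped Classical


open scoped BigOperators

/-- A reduced irreducible root system, with a choice of base of simple roots,
in a finite-dimensional `ℚ`-vector space `V` equipped with a positive definite
symmetric bilinear form. -/
structure RootSystemBase (V : Type*) [AddCommGroup V] [Module ℚ V] : Type _ where
  /-- the symmetric bilinear form `( , )` -/
  B : V →ₗ[ℚ] V →ₗ[ℚ] ℚ
  B_symm : ∀ u v : V, B u v = B v u
  B_posdef : ∀ v : V, v ≠ 0 → 0 < B v v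
  /-- the (finite) set of roots -/
  Φ : Finset V
  zero_notMem : (0 : V) ∉ Φ
  span_top : Submodule.span ℚ (Φ : Set V) = ⊤
  reflect_mem : ∀ β ∈ Φ, ∀ γ ∈ Φ, γ - (2 * B β γ / B β β) • β ∈ Φ
  integral : ∀ β ∈ Φ, ∀ γ ∈ Φ, ∃ n : ℤ, 2 * B β γ / B β β = (n : ℚ)
  reduced : ∀ β ∈ Φ, ∀ c : ℚ, c • β ∈ Φ → c = 1 ∨ c = -1
  irreducible : ∀ s ⊆ Φ, s.Nonempty →
    (∀ β ∈ s, ∀ γ ∈ Φ, γ ∉ s → B β γ = 0) → s = Φ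
  /-- the base of simple roots -/
  Δ : Finset V
  Δ_sub : Δ ⊆ Φ
  Δ_indep : LinearIndependent ℚ (Subtype.val : {x : V // x ∈ Δ} → V)
  /-- `coord v α` is the coefficient of the simple root `α` when `v` is written in the basis `Δ` -/
  coord : V → V → ℚ
  coord_spec : ∀ v : V, v = ∑ α ∈ Δ, coord v α • α
  coord_int : ∀ β ∈ Φ, ∀ α ∈ Δ, ∃ n : ℤ, coord β α = (n : ℚ)
  pos_or_neg : ∀ β ∈ Φ, (∀ α ∈ Δ, 0 ≤ coord β α) ∨ (∀ α ∈ Δ, coord β α ≤ 0)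

namespace RootSystemBase

variable {V : Type*} [AddCommGroup V] [Module ℚ V] (P : RootSystemBase V)

/-- the coroot `β^∨ = 2β/(β,β)` -/
noncomputable def coroot (β : V) : V := (2 / P.B β β) • β

/-- `m^∨_β(α)`: the coefficient of `α^∨` when `β^∨` is written in the basis `Δ^∨` -/
noncomputable def corootMult (β α : V) : ℚ := P.coord (P.coroot β) α * (P.B α α / 2)

/-- the positive roots `Φ⁺` determined by the base `Δ` -/
noncomputable def posRoots : Finset V := P.Φ.filter (fun β => ∀ α ∈ P.Δ, 0 ≤ P.coord β α)

/-- a root is long if its length is maximal -/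
def IsLong (β : V) : Prop := ∀ γ ∈ P.Φ, P.B γ γ ≤ P.B β β

/-- a root is short if its length is minimal -/
def IsShort (β : V) : Prop := ∀ γ ∈ P.Φ, P.B β β ≤ P.B γ γ

/-- `h` is the highest root: every (positive) root has smaller multiplicities -/
def IsHighestRoot (h : V) : Prop :=
  h ∈ P.Φ ∧ ∀ β ∈ P.posRoots, ∀ α ∈ P.Δ, P.coord β α ≤ P.coord h α

/-- `h₂` is the root whose coroot is the highest root of the dual system `Φ^∨` -/
def IsDualHighest (h₂ : V) : Prop :=
  h₂ ∈ P.Φ ∧ ∀ β ∈ P.posRoots, ∀ α ∈ P.Δ, P.corootMult β α ≤ P.corootMult h₂ α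

/-- a simple root `α` is special if `m_{α^h}(α) = 1` -/
def IsSpecial (α : V) : Prop :=
  α ∈ P.Δ ∧ ∀ h : V, P.IsHighestRoot h → P.coord h α = 1

/-- a simple root `α` is co-special if `m^∨_{α^{h₂}}(α) = 1` -/
def IsCospecial (α : V) : Prop :=
  α ∈ P.Δ ∧ ∀ h₂ : V, P.IsDualHighest h₂ → P.corootMult h₂ α = 1

/-- the reflection `s_β` in a root `β` (junk value `id` if `(β,β) = 0`) -/
noncomputable def refl (β : V) : V ≃ₗ[ℚ] V :=
  if h : P.B β β ≠ 0 then
    Module.reflection (x := β) (f := (2 / P.B β β) • P.B β)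
      (by simp only [LinearMap.smul_apply, smul_eq_mul]; field_simp)
  else LinearEquiv.refl ℚ V

/-- the Weyl group `W`, as a group of linear automorphisms of `V` -/
noncomputable def weylGroup : Subgroup (V ≃ₗ[ℚ] V) :=
  Subgroup.closure { g | ∃ β ∈ P.Φ, g = P.refl β }

/-- the Weyl group `W_α` of the maximal Levi determined by `α ∈ Δ`, generated by the
simple reflections `s_{α'}`, `α' ∈ Δ \ {α}` -/
noncomputable def leviWeyl (α : V) : Subgroup (V ≃ₗ[ℚ] V) :=
  Subgroup.closure { g | ∃ α' ∈ P.Δ, α' ≠ α ∧ g = P.refl α' }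

/-- `v` is `Δ`-dominant -/
def IsDominant (v : V) : Prop := ∀ α ∈ P.Δ, 0 ≤ P.B v α

/-- `v` is `(Δ \ {α})`-dominant -/
def IsDominantAway (α v : V) : Prop := ∀ α' ∈ P.Δ, α' ≠ α → 0 ≤ P.B v α'

/-- `χ` is quasi-constant -/
def IsQuasiConstant (χ : V) : Prop :=
  ∀ β ∈ P.Φ, P.B χ (P.coroot β) ≠ 0 → ∀ w ∈ P.weylGroup,
    P.B χ (w (P.coroot β)) / P.B χ (P.coroot β) ∈ ({-1, 0, 1} : Set ℚ)

end RootSystemBase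

namespace RootSystemBase

variable {V : Type*} [AddCommGroup V] [Module ℚ V] (P : RootSystemBase V)

lemma root_ne_zero {β : V} (hβ : β ∈ P.Φ) : β ≠ 0 := fun h => P.zero_notMem (h ▸ hβ)

lemma B_root_pos {β : V} (hβ : β ∈ P.Φ) : 0 < P.B β β := P.B_posdef β (P.root_ne_zero hβ)

lemma coord_unique {f : V → ℚ} {v : V} (hv : v = ∑ a ∈ P.Δ, f a • a) :
    ∀ a ∈ P.Δ, P.coord v a = f a := by
  intro a ha
  have hsum : ∑ b ∈ P.Δ, (P.coord v b - f b) • b = 0 := by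
    simp only [sub_smul, Finset.sum_sub_distrib, ← hv, ← P.coord_spec v, sub_self]
  have key := linearIndependent_iff'.mp P.Δ_indep P.Δ.attach
    (fun b => P.coord v b.1 - f b.1) ?_ ⟨a, ha⟩ (Finset.mem_attach _ _)
  · simpa using sub_eq_zero.mp (by simpa using key)
  · rw [← Finset.sum_attach P.Δ (fun b => (P.coord v b - f b) • b)] at hsum
    exact hsum

lemma coord_simple {a b : V} (ha : a ∈ P.Δ) (hb : b ∈ P.Δ) :
    P.coord a b = if b = a then 1 else 0 := by
  refine P.coord_unique (f := fun b => if b = a then 1 else 0) ?_ b hb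
  simp [ite_smul, Finset.sum_ite_eq, ha]

lemma coord_sub_smul {γ a' : V} (n : ℚ) (ha' : a' ∈ P.Δ) {b : V} (hb : b ∈ P.Δ) :
    P.coord (γ - n • a') b = P.coord γ b - (if b = a' then n else 0) := by
  refine P.coord_unique (f := fun b => P.coord γ b - (if b = a' then n else 0)) ?_ b hb
  rw [Finset.sum_congr rfl (fun x _ => sub_smul (P.coord γ x) _ x), Finset.sum_sub_distrib,
    ← P.coord_spec γ]
  congr 1
  simp [ite_smul, Finset.sum_ite_eq, ha']

/-- height -/
noncomputable def ht (v : V) : ℚ := ∑ a ∈ P.Δ, P.coord v a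

lemma ht_sub_smul {γ a' : V} (n : ℚ) (ha' : a' ∈ P.Δ) :
    P.ht (γ - n • a') = P.ht γ - n := by
  unfold ht
  rw [Finset.sum_congr rfl (fun b hb => P.coord_sub_smul n ha' hb), Finset.sum_sub_distrib]
  congr 1
  simp [Finset.sum_ite_eq, ha']

lemma B_expand (u v : V) : P.B u v = ∑ a ∈ P.Δ, P.coord v a * P.B u a := by
  conv_lhs => rw [P.coord_spec v]
  simp [map_sum, map_smul, smul_eq_mul]

lemma B_expand' (u v : V) : P.B u v = ∑ a ∈ P.Δ, P.coord u a * P.B a v := by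
  rw [P.B_symm u v, P.B_expand v u]
  exact Finset.sum_congr rfl fun a _ => by rw [P.B_symm v a]

lemma mem_posRoots {β : V} :
    β ∈ P.posRoots ↔ β ∈ P.Φ ∧ ∀ a ∈ P.Δ, 0 ≤ P.coord β a := Finset.mem_filter

lemma simple_mem_posRoots {a : V} (ha : a ∈ P.Δ) : a ∈ P.posRoots := by
  rw [P.mem_posRoots]
  refine ⟨P.Δ_sub ha, fun b hb => ?_⟩
  rw [P.coord_simple ha hb]
  split <;> norm_num

lemma cauchy_schwarz (u v : V) (hv : v ≠ 0) :
    (P.B u v)^2 ≤ P.B u u * P.B v v ∧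
      ((P.B u v)^2 = P.B u u * P.B v v → P.B v v • u = P.B u v • v) := by
  set w := P.B v v • u - P.B u v • v with hw
  have hvv : 0 < P.B v v := P.B_posdef v hv
  have hexp : P.B w w = P.B v v * (P.B u u * P.B v v - (P.B u v)^2) := by
    simp only [hw, map_sub, map_smul, LinearMap.sub_apply, LinearMap.smul_apply, smul_eq_mul]
    rw [P.B_symm v u]
    ring
  have hww : 0 ≤ P.B w w := by
    rcases eq_or_ne w 0 with h | h
    · simp [h]
    · exact le_of_lt (P.B_posdef w h)
  constructor
  · nlinarith
  · intro heq
    have : P.B w w = 0 := by rw [hexp, heq]; ring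
    have hw0 : w = 0 := by
      by_contra h
      exact absurd this (ne_of_gt (P.B_posdef w h))
    exact sub_eq_zero.mp hw0

lemma refl_apply {β : V} (hβ : P.B β β ≠ 0) (x : V) :
    P.refl β x = x - (2 * P.B β x / P.B β β) • β := by
  rw [refl, dif_pos hβ, Module.reflection_apply]
  congr 1
  simp only [LinearMap.smul_apply, smul_eq_mul]
  rw [div_mul_eq_mul_div]

lemma B_reflect {β : V} (hβ : P.B β β ≠ 0) (x y : V) :
    P.B (x - (2 * P.B β x / P.B β β) • β) (y - (2 * P.B β y / P.B β β) • β) = P.B x y := by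
  simp only [map_sub, map_smul, LinearMap.sub_apply, LinearMap.smul_apply, smul_eq_mul]
  rw [P.B_symm β x, P.B_symm β y]
  field_simp
  ring


lemma refl_mem_levi {α a : V} (ha : a ∈ P.Δ) (hne : a ≠ α) : P.refl a ∈ P.leviWeyl α :=
  Subgroup.subset_closure ⟨a, ha, hne, rfl⟩

lemma one_le_coord_highest {h : V} (hh : P.IsHighestRoot h) {a : V} (ha : a ∈ P.Δ) :
    1 ≤ P.coord h a := by
  have := hh.2 a (P.simple_mem_posRoots ha) a ha
  rwa [P.coord_simple ha ha, if_pos rfl] at this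

lemma highest_mem_posRoots {h : V} (hh : P.IsHighestRoot h) : h ∈ P.posRoots :=
  P.mem_posRoots.mpr ⟨hh.1, fun a ha => le_trans zero_le_one (P.one_le_coord_highest hh ha)⟩

lemma highest_dominant {h : V} (hh : P.IsHighestRoot h) : P.IsDominant h := by
  intro a ha
  by_contra hlt
  push_neg at hlt
  have haΦ := P.Δ_sub ha
  have haa : 0 < P.B a a := P.B_root_pos haΦ
  set n : ℚ := 2 * P.B a h / P.B a a with hn
  have hah : P.B a h < 0 := by rwa [P.B_symm a h]
  have hnneg : n < 0 := by
    rw [hn]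
    exact div_neg_of_neg_of_pos (by linarith) haa
  have hΦ' : h - n • a ∈ P.Φ := P.reflect_mem a haΦ h hh.1
  have hcoord : ∀ b ∈ P.Δ, P.coord (h - n • a) b = P.coord h b - (if b = a then n else 0) :=
    fun b hb => P.coord_sub_smul n ha hb
  have hpos' : h - n • a ∈ P.posRoots := by
    refine P.mem_posRoots.mpr ⟨hΦ', fun b hb => ?_⟩
    rw [hcoord b hb]
    have h0 : 0 ≤ P.coord h b := (P.mem_posRoots.mp (P.highest_mem_posRoots hh)).2 b hb
    split <;> linarith
  have hmax := hh.2 _ hpos' a ha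
  rw [hcoord a ha, if_pos rfl] at hmax
  linarith

lemma exists_dominant_same_length :
    ∀ (N : ℕ) (γ : V), γ ∈ P.posRoots →
      (P.Φ.filter (fun b => P.ht γ < P.ht b)).card ≤ N →
      ∃ δ ∈ P.posRoots, P.IsDominant δ ∧ P.B δ δ = P.B γ γ := by
  intro N
  induction N with
  | zero =>
    intro γ hγ hcard
    by_cases hdom : P.IsDominant γ
    · exact ⟨γ, hγ, hdom, rfl⟩
    · exfalso
      obtain ⟨a, ha, hlt⟩ := by
        unfold IsDominant at hdom; push_neg at hdom; exact hdom
      have hγΦ := (P.mem_posRoots.mp hγ).1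
      have haΦ := P.Δ_sub ha
      have haa : 0 < P.B a a := P.B_root_pos haΦ
      set n : ℚ := 2 * P.B a γ / P.B a a with hn
      have hnneg : n < 0 := div_neg_of_neg_of_pos (by rw [P.B_symm a γ]; linarith) haa
      have hΦ' : γ - n • a ∈ P.Φ := P.reflect_mem a haΦ γ hγΦ
      have hht : P.ht γ < P.ht (γ - n • a) := by
        rw [P.ht_sub_smul n ha]; linarith
      have : γ - n • a ∈ P.Φ.filter (fun b => P.ht γ < P.ht b) :=
        Finset.mem_filter.mpr ⟨hΦ', hht⟩
      have := Finset.card_pos.mpr ⟨_, this⟩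
      omega
  | succ N ih =>
    intro γ hγ hcard
    by_cases hdom : P.IsDominant γ
    · exact ⟨γ, hγ, hdom, rfl⟩
    · obtain ⟨a, ha, hlt⟩ := by
        unfold IsDominant at hdom; push_neg at hdom; exact hdom
      have hγΦ := (P.mem_posRoots.mp hγ).1
      have haΦ := P.Δ_sub ha
      have haa : 0 < P.B a a := P.B_root_pos haΦ
      set n : ℚ := 2 * P.B a γ / P.B a a with hn
      have hnneg : n < 0 := div_neg_of_neg_of_pos (by rw [P.B_symm a γ]; linarith) haa
      have hΦ' : γ - n • a ∈ P.Φ := P.reflect_mem a haΦ γ hγΦ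
      have hpos' : γ - n • a ∈ P.posRoots := by
        refine P.mem_posRoots.mpr ⟨hΦ', fun b hb => ?_⟩
        rw [P.coord_sub_smul n ha hb]
        have h0 : 0 ≤ P.coord γ b := (P.mem_posRoots.mp hγ).2 b hb
        split <;> linarith
      have hht : P.ht γ < P.ht (γ - n • a) := by
        rw [P.ht_sub_smul n ha]; linarith
      have hss : P.Φ.filter (fun b => P.ht (γ - n • a) < P.ht b) ⊂
          P.Φ.filter (fun b => P.ht γ < P.ht b) := by
        refine Finset.ssubset_iff_of_subset ?_ |>.mpr ?_
        · intro b hb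
          rw [Finset.mem_filter] at hb ⊢
          exact ⟨hb.1, lt_trans hht hb.2⟩
        · exact ⟨γ - n • a, Finset.mem_filter.mpr ⟨hΦ', hht⟩,
            fun hmem => absurd (Finset.mem_filter.mp hmem).2 (lt_irrefl _)⟩
      have hcard' : (P.Φ.filter (fun b => P.ht (γ - n • a) < P.ht b)).card ≤ N := by
        have := Finset.card_lt_card hss
        omega
      obtain ⟨δ, hδ, hδdom, hδlen⟩ := ih (γ - n • a) hpos' hcard'
      exact ⟨δ, hδ, hδdom, by rw [hδlen, hn, P.B_reflect (ne_of_gt haa) γ γ]⟩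

lemma B_le_highest {h : V} (hh : P.IsHighestRoot h) {δ : V} (hδ : δ ∈ P.posRoots)
    (hdom : P.IsDominant δ) : P.B δ δ ≤ P.B h h := by
  have h1 : P.B δ δ ≤ P.B h δ := by
    rw [P.B_expand' δ δ, P.B_expand' h δ]
    refine Finset.sum_le_sum fun a ha => ?_
    have hge : P.coord δ a ≤ P.coord h a := hh.2 δ hδ a ha
    have hB : 0 ≤ P.B a δ := by rw [P.B_symm a δ]; exact hdom a ha
    exact mul_le_mul_of_nonneg_right hge hB
  have h2 : P.B h δ ≤ P.B h h := by
    rw [P.B_symm h δ, P.B_expand' δ h, P.B_expand' h h]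
    refine Finset.sum_le_sum fun a ha => ?_
    have hge : P.coord δ a ≤ P.coord h a := hh.2 δ hδ a ha
    have hB : 0 ≤ P.B a h := by rw [P.B_symm a h]; exact P.highest_dominant hh a ha
    exact mul_le_mul_of_nonneg_right hge hB
  linarith


lemma descend_step {α : V} (hα : α ∈ P.Δ) {γ : V} (hγ : γ ∈ P.posRoots)
    (hc1 : P.coord γ α = 1) (hlen : P.B α α ≤ P.B γ γ) (hγα : γ ≠ α) :
    ∃ a ∈ P.Δ, a ≠ α ∧ 0 < P.B γ a := by
  by_contra hcon
  push_neg at hcon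
  have hγΦ := (P.mem_posRoots.mp hγ).1
  have hαΦ := P.Δ_sub hα
  have hαα : 0 < P.B α α := P.B_root_pos hαΦ
  have hγγ : 0 < P.B γ γ := P.B_root_pos hγΦ
  -- (γ,γ) ≤ (γ,α)
  have hkey : P.B γ γ ≤ P.B γ α := by
    have hexp := P.B_expand γ γ
    have hle : ∀ a ∈ P.Δ, P.coord γ a * P.B γ a ≤ (if a = α then P.B γ α else 0) := by
      intro a ha
      by_cases haα : a = α
      · subst haα; rw [if_pos rfl, hc1, one_mul]
      · rw [if_neg haα]
        exact mul_nonpos_of_nonneg_of_nonpos ((P.mem_posRoots.mp hγ).2 a ha)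
          (hcon a ha haα)
    calc P.B γ γ = ∑ a ∈ P.Δ, P.coord γ a * P.B γ a := hexp
      _ ≤ ∑ a ∈ P.Δ, (if a = α then P.B γ α else 0) := Finset.sum_le_sum hle
      _ = P.B γ α := by rw [Finset.sum_ite_eq' P.Δ α (fun _ => P.B γ α), if_pos hα]
  have hγα0 : 0 < P.B γ α := lt_of_lt_of_le hγγ hkey
  have hαγ : P.B α γ = P.B γ α := P.B_symm α γ
  rcases le_or_gt (P.B α α) (P.B γ α) with hge | hlt
  · -- Cauchy-Schwarz equality forces γ = α
    have hcs := P.cauchy_schwarz α γ (P.root_ne_zero hγΦ)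
    have heq : (P.B α γ)^2 = P.B α α * P.B γ γ := by nlinarith [hcs.1]
    have hw := hcs.2 heq
    set c : ℚ := P.B α γ / P.B γ γ with hc
    have hcγ : c • γ = α := by
      rw [hc, div_eq_inv_mul, mul_smul, ← hw, smul_smul,
        inv_mul_cancel₀ (ne_of_gt hγγ), one_smul]
    have hcΦ : c • γ ∈ P.Φ := by rw [hcγ]; exact hαΦ
    rcases P.reduced γ hγΦ c hcΦ with h1 | h1
    · apply hγα
      rw [← hcγ, h1, one_smul]
    · have hcpos : 0 < c := div_pos (by linarith) hγγ
      rw [h1] at hcpos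
      linarith
  · -- the Cartan integer 2(γ,α)/(α,α) equals 1
    obtain ⟨m, hm⟩ := P.integral α hαΦ γ hγΦ
    have hm0 : (0:ℚ) < m := by
      rw [← hm]
      exact div_pos (by linarith) hαα
    have hm2 : (m:ℚ) < 2 := by
      rw [← hm, div_lt_iff₀ hαα]
      linarith
    have hm1 : m = 1 := by
      have h1 : 0 < m := by exact_mod_cast hm0
      have h2 : m < 2 := by exact_mod_cast hm2
      omega
    rw [hm1] at hm
    have : 2 * P.B α γ = P.B α α := by
      field_simp at hm
      linarith
    linarith

lemma descend {α : V} (hα : α ∈ P.Δ) :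
    ∀ (N : ℕ) (γ : V), γ ∈ P.posRoots → P.coord γ α = 1 → P.B α α ≤ P.B γ γ →
      (P.Φ.filter (fun b => P.ht b < P.ht γ)).card ≤ N →
      ∃ w ∈ P.leviWeyl α, w α = γ := by
  have hαΦ := P.Δ_sub hα
  have hαα : 0 < P.B α α := P.B_root_pos hαΦ
  intro N
  induction N with
  | zero =>
    intro γ hγ hc1 hlen hcard
    by_cases hγα : γ = α
    · exact ⟨1, one_mem _, by rw [hγα]; rfl⟩
    · exfalso
      obtain ⟨a, haΔ, hane, hpos'⟩ := P.descend_step hα hγ hc1 hlen hγα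
      have hγΦ := (P.mem_posRoots.mp hγ).1
      have haΦ := P.Δ_sub haΔ
      have haa : 0 < P.B a a := P.B_root_pos haΦ
      set n : ℚ := 2 * P.B a γ / P.B a a with hn
      have hnpos : 0 < n := div_pos (by rw [P.B_symm a γ]; linarith) haa
      have hΦ' : γ - n • a ∈ P.Φ := P.reflect_mem a haΦ γ hγΦ
      have hht : P.ht (γ - n • a) < P.ht γ := by
        rw [P.ht_sub_smul n haΔ]; linarith
      have : γ - n • a ∈ P.Φ.filter (fun b => P.ht b < P.ht γ) :=
        Finset.mem_filter.mpr ⟨hΦ', hht⟩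
      have := Finset.card_pos.mpr ⟨_, this⟩
      omega
  | succ N ih =>
    intro γ hγ hc1 hlen hcard
    by_cases hγα : γ = α
    · exact ⟨1, one_mem _, by rw [hγα]; rfl⟩
    · obtain ⟨a, haΔ, hane, hpos'⟩ := P.descend_step hα hγ hc1 hlen hγα
      have hγΦ := (P.mem_posRoots.mp hγ).1
      have haΦ := P.Δ_sub haΔ
      have haa : 0 < P.B a a := P.B_root_pos haΦ
      set n : ℚ := 2 * P.B a γ / P.B a a with hn
      have hnpos : 0 < n := div_pos (by rw [P.B_symm a γ]; linarith) haa
      have hΦ' : γ - n • a ∈ P.Φ := P.reflect_mem a haΦ γ hγΦ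
      have hcoordα : P.coord (γ - n • a) α = 1 := by
        rw [P.coord_sub_smul n haΔ hα, if_neg (fun hc => hane hc.symm), hc1, sub_zero]
      have hpos2 : γ - n • a ∈ P.posRoots := by
        refine P.mem_posRoots.mpr ⟨hΦ', fun b hb => ?_⟩
        rcases P.pos_or_neg _ hΦ' with hp | hn'
        · exact hp b hb
        · have := hn' α hα
          rw [hcoordα] at this
          linarith
      have hlen2 : P.B α α ≤ P.B (γ - n • a) (γ - n • a) := by
        rw [hn, P.B_reflect (ne_of_gt haa) γ γ]; exact hlen
      have hht : P.ht (γ - n • a) < P.ht γ := by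
        rw [P.ht_sub_smul n haΔ]; linarith
      have hss : P.Φ.filter (fun b => P.ht b < P.ht (γ - n • a)) ⊂
          P.Φ.filter (fun b => P.ht b < P.ht γ) := by
        refine Finset.ssubset_iff_of_subset ?_ |>.mpr ?_
        · intro b hb
          rw [Finset.mem_filter] at hb ⊢
          exact ⟨hb.1, lt_trans hb.2 hht⟩
        · exact ⟨γ - n • a, Finset.mem_filter.mpr ⟨hΦ', hht⟩,
            fun hmem => absurd (Finset.mem_filter.mp hmem).2 (lt_irrefl _)⟩
      have hcard' : (P.Φ.filter (fun b => P.ht b < P.ht (γ - n • a))).card ≤ N := by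
        have := Finset.card_lt_card hss
        omega
      obtain ⟨w', hw', hw'α⟩ := ih (γ - n • a) hpos2 hcoordα hlen2 hcard'
      refine ⟨P.refl a * w', mul_mem (P.refl_mem_levi haΔ hane) hw', ?_⟩
      have hmul : (P.refl a * w') α = P.refl a (w' α) := rfl
      rw [hmul, hw'α, P.refl_apply (ne_of_gt haa)]
      have hBval : P.B a (γ - n • a) = - P.B a γ := by
        rw [map_sub, map_smul, smul_eq_mul, hn]
        field_simp
        ring
      rw [hBval]
      have hcoef : 2 * -P.B a γ / P.B a a = -n := by rw [hn]; ring
      rw [hcoef]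
      module

end RootSystemBase

open RootSystemBase in
/-- **Corollary.** If `α ∈ Δ` is special then `α` is `W_α`-conjugate to the
highest root `α^h`. -/
theorem leviConjugate_highestRoot_of_special
    {V : Type*} [AddCommGroup V] [Module ℚ V] [FiniteDimensional ℚ V]
    (P : RootSystemBase V) (α : V) (hsp : P.IsSpecial α)
    (h : V) (hh : P.IsHighestRoot h) :
    ∃ w ∈ P.leviWeyl α, w α = h := by
  have hαΔ := hsp.1
  have hαΦ := P.Δ_sub hαΔ
  have hc1 : P.coord h α = 1 := hsp.2 h hh
  have hhpos : h ∈ P.posRoots := P.highest_mem_posRoots hh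
  obtain ⟨δ, hδpos, hδdom, hδlen⟩ :=
    P.exists_dominant_same_length
      ((P.Φ.filter (fun b => P.ht α < P.ht b)).card) α (P.simple_mem_posRoots hαΔ) le_rfl
  have hlen : P.B α α ≤ P.B h h := by
    have := P.B_le_highest hh hδpos hδdom
    rw [hδlen] at this
    exact this
  exact P.descend hαΔ ((P.Φ.filter (fun b => P.ht b < P.ht h)).card) h hhpos hc1 hlen le_rfl
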